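/- arXiv:2312.13800 — 2 statements merged into one kernel-verified Lean document; each statement's English description precedes it below -/
import Mathlib

section
/- Let t ∈ ℝ be fixed, h(x) = (t² + ‖x‖²)^(−β/2), and let p: ℝ^d → ℝ be nonnegative, rotationally symmetric with r ↦ p(r·y) non-increasing in r = ‖x‖. Then for every u ∈ ℝ^d, ∫_{ℝ^d} h(x+u)·p(x) dx ≤ 2 ∫_{ℝ^d} h(x)·p(x) dx, provided the integrals exist. -/
/-!
On the set where `‖x‖ ≤ ‖x + u‖` the weight decreases, `h (x + u) ≤ h x`; on the complement the
radial profile increases, `p x ≤ p (x + u)`. Hence pointwise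
`h (x + u) p x ≤ h x p x + h (x + u) p (x + u)`, and the last term integrates to `∫ h p` by
translation invariance of Lebesgue measure.
-/

open MeasureTheory

theorem integral_comp_add_mul_le_two_mul {E : Type*} [NormedAddCommGroup E] [MeasurableSpace E]
    [MeasurableAdd E] {μ : Measure E} [μ.IsAddRightInvariant] {h p : E → ℝ} {u : E}
    (h_nonneg : ∀ x, 0 ≤ h x) (p_nonneg : ∀ x, 0 ≤ p x)
    (h_shift_le : ∀ᵐ x ∂μ, ‖x‖ ≤ ‖x + u‖ → h (x + u) ≤ h x)
    (p_anti : ∀ x y, ‖x‖ ≤ ‖y‖ → p y ≤ p x)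
    (hint_shift : Integrable (fun x => h (x + u) * p x) μ)
    (hint : Integrable (fun x => h x * p x) μ) :
    ∫ x, h (x + u) * p x ∂μ ≤ 2 * ∫ x, h x * p x ∂μ := by
  have hint' : Integrable (fun x => h (x + u) * p (x + u)) μ := hint.comp_add_right u
  have split : ∀ᵐ x ∂μ, h (x + u) * p x ≤ h x * p x + h (x + u) * p (x + u) := by
    filter_upwards [h_shift_le] with x hx
    have := mul_nonneg (h_nonneg x) (p_nonneg x)
    have := mul_nonneg (h_nonneg (x + u)) (p_nonneg (x + u))
    rcases le_total ‖x‖ ‖x + u‖ with hle | hle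
    · nlinarith [mul_le_mul_of_nonneg_right (hx hle) (p_nonneg x)]
    · nlinarith [mul_le_mul_of_nonneg_left (p_anti _ _ hle) (h_nonneg (x + u))]
  calc ∫ x, h (x + u) * p x ∂μ
      ≤ ∫ x, h x * p x + h (x + u) * p (x + u) ∂μ :=
        integral_mono_ae hint_shift (hint.add hint') split
    _ = ∫ x, h x * p x ∂μ + ∫ x, h (x + u) * p (x + u) ∂μ := integral_add hint hint'
    _ = 2 * ∫ x, h x * p x ∂μ := by
      rw [integral_add_right_eq_self (fun x => h x * p x) u]; ring

theorem rpow_neg_sq_add_norm_sq_le {E : Type*} [NormedAddCommGroup E] (t : ℝ) {β : ℝ} (hβ : 0 ≤ β)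
    {x y : E} (hx : x ≠ 0) (hxy : ‖x‖ ≤ ‖y‖) :
    (t ^ 2 + ‖y‖ ^ 2) ^ (-β / 2) ≤ (t ^ 2 + ‖x‖ ^ 2) ^ (-β / 2) := by
  have : 0 < ‖x‖ := norm_pos_iff.mpr hx
  exact Real.rpow_le_rpow_of_nonpos (by positivity) (by gcongr) (by linarith)

theorem ae_rpow_neg_sq_add_norm_add_sq_le {E : Type*} [NormedAddCommGroup E] [NormedSpace ℝ E]
    [FiniteDimensional ℝ E] [MeasurableSpace E] [BorelSpace E] (μ : Measure E) [μ.IsAddHaarMeasure]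
    (t : ℝ) {β : ℝ} (hβ : 0 ≤ β) (u : E) :
    ∀ᵐ x ∂μ, ‖x‖ ≤ ‖x + u‖ → (t ^ 2 + ‖x + u‖ ^ 2) ^ (-β / 2) ≤ (t ^ 2 + ‖x‖ ^ 2) ^ (-β / 2) := by
  -- For `t = 0`, `β > 0` the weight vanishes at `0` (as `0 ^ (-β / 2) = 0`), so the bound fails
  -- there; the point `0` is null unless `E` is trivial, in which case `x + u = x`.
  rcases subsingleton_or_nontrivial E with hE | hE
  · exact .of_forall fun x _ => by rw [Subsingleton.elim (x + u) x]
  · filter_upwards [measure_eq_zero_iff_ae_notMem.mp (measure_singleton (μ := μ) 0)] with x hx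
    exact rpow_neg_sq_add_norm_sq_le t hβ hx

theorem integral_shift_le_two_mul_general {d : ℕ} (t β : ℝ) (hβ : 0 ≤ β)
    (p : EuclideanSpace ℝ (Fin d) → ℝ)
    (hp0 : ∀ x, 0 ≤ p x)
    (hmono : ∀ x y : EuclideanSpace ℝ (Fin d), ‖x‖ ≤ ‖y‖ → p y ≤ p x)
    (u : EuclideanSpace ℝ (Fin d))
    (h1 : Integrable (fun x => (t^2 + ‖x + u‖^2) ^ (-β/2) * p x))
    (h2 : Integrable (fun x => (t^2 + ‖x‖^2) ^ (-β/2) * p x)) :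
    ∫ x, (t^2 + ‖x + u‖^2) ^ (-β/2) * p x ≤ 2 * ∫ x, (t^2 + ‖x‖^2) ^ (-β/2) * p x :=
  integral_comp_add_mul_le_two_mul (h := fun x => (t ^ 2 + ‖x‖ ^ 2) ^ (-β / 2))
    (fun _ => Real.rpow_nonneg (by positivity) _) hp0
    (ae_rpow_neg_sq_add_norm_add_sq_le volume t hβ u) hmono h1 h2

theorem integral_shift_le_two_mul {d : ℕ} (t β : ℝ) (hβ : 0 ≤ β)
    (p : EuclideanSpace ℝ (Fin d) → ℝ)
    (hp0 : ∀ x, 0 ≤ p x)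
    (hsym : ∀ x y : EuclideanSpace ℝ (Fin d), ‖x‖ = ‖y‖ → p x = p y)
    (hmono : ∀ x y : EuclideanSpace ℝ (Fin d), ‖x‖ ≤ ‖y‖ → p y ≤ p x)
    (u : EuclideanSpace ℝ (Fin d))
    (h1 : Integrable (fun x => (t^2 + ‖x + u‖^2) ^ (-β/2) * p x))
    (h2 : Integrable (fun x => (t^2 + ‖x‖^2) ^ (-β/2) * p x)) :
    ∫ x, (t^2 + ‖x + u‖^2) ^ (-β/2) * p x ≤ 2 * ∫ x, (t^2 + ‖x‖^2) ^ (-β/2) * p x :=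
  integral_shift_le_two_mul_general t β hβ p hp0 hmono u h1 h2
end

section
/- Improvement for graphs under stable drift, α ∈ (0,1]: for a Borel set T ⊆ ℝ_+ and Borel f : T → ℝ^d, with φ_α = P^α-dim G_T(f), one has φ_1 ≥ max( α·φ_α, φ_α + (1 − 1/α)·d ), where φ_1 = dim G_T(f). -/
/-!
Both inequalities come from covering arguments. If `s > dim A`, then `A` is covered by balls
of small radii `ρₙ` with `∑ ρₙ ^ s` small, i.e. by cubes of side `L = 2ρₙ`. A cube of side
`L ≤ 1` lies in a single `α`-parabolic cylinder of time length and diameter `L ^ α`, so the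
parabolic `β`-measure is finite once `α β > dim A`. The same cube is also covered by
`⌈L ^ (1 - 1/α)⌉ ^ d ≤ 2 ^ d L ^ ((1 - 1/α) d)` cylinders of time length and diameter `L`,
at total cost `≤ 2 ^ d L ^ (β - (1/α - 1) d)`, so the parabolic `β`-measure is finite once
`β - (1/α - 1) d > dim A`.
-/

open MeasureTheory Set ENNReal NNReal

noncomputable section

/-- An `α`-parabolic cylinder in `ℝ × ℝ^d`: a set of the form
`[t, t+c] × ∏_j [x_j, x_j + c^(1/α)]` with `c ∈ (0,1]`. -/
def IsPCyl (α : ℝ) {d : ℕ} (S : Set (ℝ × (Fin d → ℝ))) : Prop :=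
  ∃ (t : ℝ) (x : Fin d → ℝ) (c : ℝ), c ∈ Set.Ioc (0:ℝ) 1 ∧
    S = Set.Icc t (t + c) ×ˢ Set.Icc x (fun j => x j + c ^ (1/α))

/-- The `α`-parabolic `β`-Hausdorff (outer) measure: limit as `δ ↓ 0` of the infimum of
`∑ (diam P_k)^β` over countable covers by `α`-parabolic cylinders of diameter `≤ δ`. -/
def pHaus (α β : ℝ) {d : ℕ} (A : Set (ℝ × (Fin d → ℝ))) : ℝ≥0∞ :=
  ⨆ (δ : ℝ) (_ : 0 < δ),
    ⨅ (P : ℕ → Set (ℝ × (Fin d → ℝ))) (_ : A ⊆ ⋃ k, P k)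
      (_ : ∀ k, IsPCyl α (P k)) (_ : ∀ k, EMetric.diam (P k) ≤ ENNReal.ofReal δ),
      ∑' k, EMetric.diam (P k) ^ β

/-- The `α`-parabolic Hausdorff dimension. -/
def pDim (α : ℝ) {d : ℕ} (A : Set (ℝ × (Fin d → ℝ))) : ℝ≥0∞ :=
  ⨆ (β : ℝ≥0) (_ : pHaus α (β : ℝ) A = ∞), (β : ℝ≥0∞)

open Metric

lemma ENNReal.ofReal_rpow_inv_rpow (x : ℝ≥0) {s : ℝ} (hs : 0 < s) :
    ENNReal.ofReal ((x : ℝ) ^ s⁻¹) ^ s = x := by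
  rw [← ENNReal.ofReal_rpow_of_nonneg NNReal.zero_le_coe (inv_nonneg.2 hs.le),
    ENNReal.ofReal_coe_nnreal, ENNReal.rpow_inv_rpow hs.ne']

theorem exists_closedBall_cover_of_hausdorffMeasure_eq_zero {X : Type*} [MetricSpace X]
    [MeasurableSpace X] [BorelSpace X] [Nonempty X] {A : Set X} {s : ℝ} (hs : 0 < s)
    (hA : μH[s] A = 0) {δ : ℝ} (hδ : 0 < δ) {ε : ℝ≥0∞} (hε : ε ≠ 0) :
    ∃ (x : ℕ → X) (ρ : ℕ → ℝ), (∀ n, ρ n ∈ Ioc 0 δ) ∧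
      A ⊆ ⋃ n, closedBall (x n) (ρ n) ∧ ∑' n, ENNReal.ofReal (ρ n) ^ s < ε := by
  have hε2 : ε / 2 ≠ 0 := (ENNReal.half_pos hε).ne'
  obtain ⟨t, hAt, htδ, hts⟩ : ∃ t : ℕ → Set X, A ⊆ ⋃ n, t n ∧
      (∀ n, ediam (t n) ≤ ENNReal.ofReal δ) ∧
      ∑' n, ⨆ _ : (t n).Nonempty, ediam (t n) ^ s < ε / 2 := by
    rw [Measure.hausdorffMeasure_apply] at hA
    have hinf := (le_iSup₂ (f := fun (r : ℝ≥0∞) (_ : 0 < r) =>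
      ⨅ (t : ℕ → Set X) (_ : A ⊆ ⋃ n, t n) (_ : ∀ n, ediam (t n) ≤ r),
        ∑' n, ⨆ _ : (t n).Nonempty, ediam (t n) ^ s) (ENNReal.ofReal δ)
      (ENNReal.ofReal_pos.2 hδ)).trans_eq hA
    simpa only [iInf_lt_iff, exists_prop] using hinf.trans_lt (pos_iff_ne_zero.2 hε2)
  obtain ⟨ε', hε'0, hε'⟩ := ENNReal.exists_pos_sum_of_countable hε2 ℕ
  have ht_ne_top n : ediam (t n) ≠ ⊤ := ne_top_of_le_ne_top ENNReal.ofReal_ne_top (htδ n)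
  classical
  let x n := if h : (t n).Nonempty then h.some else Classical.arbitrary X
  -- enlarging the radius to `e n` keeps the balls nondegenerate at a cost of at most `ε' n`
  let e n := min δ ((ε' n : ℝ) ^ s⁻¹)
  refine ⟨x, fun n => max (ediam (t n)).toReal (e n), fun n => ⟨?_, ?_⟩, ?_, ?_⟩
  · exact lt_max_of_lt_right (lt_min hδ (Real.rpow_pos_of_pos (hε'0 n) _))
  · exact max_le (ENNReal.toReal_le_of_le_ofReal hδ.le (htδ n)) (min_le_left _ _)
  · intro q hq
    obtain ⟨n, hn⟩ := mem_iUnion.1 (hAt hq)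
    have hne : (t n).Nonempty := ⟨q, hn⟩
    refine mem_iUnion.2 ⟨n, mem_closedBall.2 (le_max_of_le_left ?_)⟩
    simp only [x, dif_pos hne]
    exact dist_le_diam_of_mem' (ht_ne_top n) hn hne.some_mem
  · have hterm n : ENNReal.ofReal (max (ediam (t n)).toReal (e n)) ^ s ≤
        (⨆ _ : (t n).Nonempty, ediam (t n) ^ s) + ε' n := by
      rw [ENNReal.ofReal_max, ENNReal.max_rpow hs.le, ENNReal.ofReal_toReal (ht_ne_top n)]
      refine max_le (le_add_right ?_) (le_add_left ?_)
      · rcases (t n).eq_empty_or_nonempty with h | h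
        · simp [h, ENNReal.zero_rpow_of_pos hs]
        · exact le_iSup_of_le h le_rfl
      · rw [← ENNReal.ofReal_rpow_inv_rpow (ε' n) hs]
        exact ENNReal.rpow_le_rpow (ENNReal.ofReal_le_ofReal (min_le_right _ _)) hs.le
    calc ∑' n, ENNReal.ofReal (max (ediam (t n)).toReal (e n)) ^ s
        ≤ ∑' n, ((⨆ _ : (t n).Nonempty, ediam (t n) ^ s) + ε' n) :=
          ENNReal.tsum_le_tsum hterm
      _ = ∑' n, (⨆ _ : (t n).Nonempty, ediam (t n) ^ s) + ∑' n, (ε' n : ℝ≥0∞) :=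
          ENNReal.tsum_add
      _ < ε / 2 + ε / 2 := ENNReal.add_lt_add hts hε'
      _ = ε := ENNReal.add_halves ε

section Cylinders

variable {d : ℕ} {α : ℝ}

def pCyl (α t : ℝ) (x : Fin d → ℝ) (c : ℝ) : Set (ℝ × (Fin d → ℝ)) :=
  Icc t (t + c) ×ˢ Icc x (fun j => x j + c ^ (1 / α))

def cube (t : ℝ) (x : Fin d → ℝ) (L : ℝ) : Set (ℝ × (Fin d → ℝ)) :=
  Icc t (t + L) ×ˢ Icc x (fun j => x j + L)

lemma isPCyl_pCyl {t c : ℝ} (x : Fin d → ℝ) (hc : c ∈ Ioc 0 1) :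
    IsPCyl α (pCyl α t x c) :=
  ⟨t, x, c, hc, rfl⟩

lemma ediam_pCyl_le (hα₀ : 0 < α) (hα₁ : α ≤ 1) {t c : ℝ} (x : Fin d → ℝ)
    (hc : c ∈ Icc 0 1) :
    ediam (pCyl α t x c) ≤ ENNReal.ofReal c := by
  have hpow : c ^ (1 / α) ≤ c :=
    Real.rpow_le_self_of_le_one hc.1 hc.2 ((one_le_div hα₀).2 hα₁)
  refine ediam_le fun p hp q hq => ?_
  rw [edist_dist, Prod.dist_eq]
  refine ENNReal.ofReal_le_ofReal (max_le ?_ ?_)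
  · simpa using Real.dist_le_of_mem_Icc hp.1 hq.1
  · refine (Real.dist_le_of_mem_pi_Icc hp.2 hq.2).trans ((dist_pi_le_iff hc.1).2 fun j => ?_)
    simpa [Real.dist_eq, abs_of_nonneg (Real.rpow_nonneg hc.1 _)] using hpow

lemma closedBall_eq_cube (p : ℝ × (Fin d → ℝ)) {ρ : ℝ} (hρ : 0 ≤ ρ) :
    closedBall p ρ = cube (p.1 - ρ) (fun j => p.2 j - ρ) (2 * ρ) := by
  have hsub (a : ℝ) : a - ρ + 2 * ρ = a + ρ := by ring
  rw [← closedBall_prod_same, closedBall_pi _ hρ]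
  simp only [Real.closedBall_eq_Icc, pi_univ_Icc, cube, hsub]

lemma cube_subset_pCyl (hα₀ : 0 < α) (hα₁ : α ≤ 1) (t : ℝ) (x : Fin d → ℝ) {L : ℝ}
    (hL : L ∈ Icc 0 1) : cube t x L ⊆ pCyl α t x (L ^ α) := by
  rw [cube, pCyl, one_div, Real.rpow_rpow_inv hL.1 hα₀.ne']
  have hLα := Real.self_le_rpow_of_le_one hL.1 hL.2 hα₁
  exact prod_mono (Icc_subset_Icc_right (by linarith)) subset_rfl

lemma Icc_subset_iUnion_Icc_add_mul {a b h : ℝ} {M : ℕ} (hh : 0 < h) (hM : 0 < M)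
    (hb : b ≤ a + M * h) : Icc a b ⊆ ⋃ i : Fin M, Icc (a + i * h) (a + i * h + h) := by
  intro y hy
  set k := ⌊(y - a) / h⌋₊
  have hk : k * h ≤ y - a :=
    (le_div_iff₀ hh).1 (Nat.floor_le (div_nonneg (by linarith [hy.1]) hh.le))
  refine mem_iUnion.2 ⟨⟨min k (M - 1), by omega⟩, ?_, ?_⟩
  · have : ((min k (M - 1) : ℕ) : ℝ) ≤ k := by exact_mod_cast min_le_left _ _
    dsimp only
    nlinarith
  · rcases min_choice k (M - 1) with hmin | hmin <;> dsimp only <;> rw [hmin]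
    · have := (div_lt_iff₀ hh).1 (Nat.lt_floor_add_one ((y - a) / h))
      linarith
    · rw [Nat.cast_sub hM, Nat.cast_one]
      linarith [hy.2]

lemma cube_subset_iUnion_pCyl (t : ℝ) (x : Fin d → ℝ) {L : ℝ} (hL : 0 < L)
    {M : ℕ} (hM : L ≤ M * L ^ (1 / α)) :
    cube t x L ⊆ ⋃ v : Fin d → Fin M, pCyl α t (fun j => x j + v j * L ^ (1 / α)) L := by
  have hh : 0 < L ^ (1 / α) := Real.rpow_pos_of_pos hL _
  have hM0 : 0 < M := Nat.pos_of_ne_zero fun h => by simp [h] at hM; linarith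
  rintro p ⟨hp₁, hp₂⟩
  have hcover : p.2 ∈ ⋃ v : Fin d → Fin M,
      pi univ fun j =>
        Icc (x j + v j * L ^ (1 / α)) (x j + v j * L ^ (1 / α) + L ^ (1 / α)) := by
    rw [iUnion_univ_pi fun j (i : Fin M) =>
      Icc (x j + i * L ^ (1 / α)) (x j + i * L ^ (1 / α) + L ^ (1 / α))]
    exact fun j _ => Icc_subset_iUnion_Icc_add_mul hh hM0 (by linarith) ⟨hp₂.1 j, hp₂.2 j⟩
  obtain ⟨v, hv⟩ := mem_iUnion.1 hcover
  exact mem_iUnion.2 ⟨v, hp₁, by rwa [← pi_univ_Icc]⟩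

lemma ceil_rpow_pow_mul_rpow_le (hα₀ : 0 < α) (hα₁ : α ≤ 1) {L : ℝ} (hL₀ : 0 < L)
    (hL₁ : L ≤ 1) (β : ℝ) (d : ℕ) :
    (⌈L ^ (1 - 1 / α)⌉₊ : ℝ) ^ d * L ^ β ≤ 2 ^ d * L ^ (β - (1 / α - 1) * d) := by
  have hone : 1 ≤ L ^ (1 - 1 / α) := Real.one_le_rpow_of_pos_of_le_one_of_nonpos hL₀ hL₁
    (by linarith [(one_le_div hα₀).2 hα₁])
  calc (⌈L ^ (1 - 1 / α)⌉₊ : ℝ) ^ d * L ^ β ≤ (2 * L ^ (1 - 1 / α)) ^ d * L ^ β := by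
        gcongr
        exact Nat.ceil_le_two_mul (by linarith)
    _ = 2 ^ d * L ^ (β - (1 / α - 1) * d) := by
        rw [mul_pow, ← Real.rpow_natCast (L ^ _), ← Real.rpow_mul hL₀.le, mul_assoc,
          ← Real.rpow_add hL₀]
        ring_nf

def CubeCoverBound (α β γ : ℝ) (C : ℝ≥0∞) (d : ℕ) : Prop :=
  ∀ (t : ℝ) (x : Fin d → ℝ) (L : ℝ), 0 < L → L ≤ 1 →
    ∃ (ι : Type) (_ : Countable ι) (P : ι → Set (ℝ × (Fin d → ℝ))),
      cube t x L ⊆ ⋃ i, P i ∧ (∀ i, IsPCyl α (P i)) ∧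
      (∀ i, ediam (P i) ≤ ENNReal.ofReal (L ^ α)) ∧
      ∑' i, ediam (P i) ^ β ≤ C * ENNReal.ofReal (L ^ γ)

lemma cubeCoverBound_single (hα₀ : 0 < α) (hα₁ : α ≤ 1) {β : ℝ} (hβ : 0 ≤ β) :
    CubeCoverBound α β (α * β) 1 d := by
  intro t x L hL₀ hL₁
  have hc : L ^ α ∈ Ioc 0 1 :=
    ⟨Real.rpow_pos_of_pos hL₀ α, Real.rpow_le_one hL₀.le hL₁ hα₀.le⟩
  have hdiam := ediam_pCyl_le hα₀ hα₁ (t := t) x ⟨hc.1.le, hc.2⟩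
  refine ⟨Unit, inferInstance, fun _ => pCyl α t x (L ^ α), ?_, fun _ => isPCyl_pCyl x hc,
    fun _ => hdiam, ?_⟩
  · simpa only [iUnion_const] using cube_subset_pCyl hα₀ hα₁ t x ⟨hL₀.le, hL₁⟩
  · rw [tsum_fintype, Fintype.sum_unique, one_mul, Real.rpow_mul hL₀.le,
      ← ENNReal.ofReal_rpow_of_nonneg hc.1.le hβ]
    exact ENNReal.rpow_le_rpow hdiam hβ

lemma cubeCoverBound_grid (hα₀ : 0 < α) (hα₁ : α ≤ 1) {β : ℝ} (hβ : 0 ≤ β) :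
    CubeCoverBound α β (β - (1 / α - 1) * d) (2 ^ d) d := by
  intro t x L hL₀ hL₁
  set M := ⌈L ^ (1 - 1 / α)⌉₊
  have hsplit : L ^ (1 - 1 / α) * L ^ (1 / α) = L := by
    rw [← Real.rpow_add hL₀, sub_add_cancel, Real.rpow_one]
  have hM : L ≤ M * L ^ (1 / α) := by
    conv_lhs => rw [← hsplit]
    gcongr
    exact Nat.le_ceil _
  have hdiam (v : Fin d → Fin M) :=
    ediam_pCyl_le hα₀ hα₁ (t := t) (fun j => x j + v j * L ^ (1 / α)) ⟨hL₀.le, hL₁⟩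
  refine ⟨Fin d → Fin M, inferInstance,
    fun v => pCyl α t (fun j => x j + v j * L ^ (1 / α)) L,
    cube_subset_iUnion_pCyl t x hL₀ hM, fun v => isPCyl_pCyl _ ⟨hL₀, hL₁⟩,
    fun v => (hdiam v).trans
      (ENNReal.ofReal_le_ofReal (Real.self_le_rpow_of_le_one hL₀.le hL₁ hα₁)), ?_⟩
  calc ∑' v : Fin d → Fin M, ediam (pCyl α t (fun j => x j + v j * L ^ (1 / α)) L) ^ β
      ≤ ∑' _ : Fin d → Fin M, ENNReal.ofReal L ^ β :=
        ENNReal.tsum_le_tsum fun v => ENNReal.rpow_le_rpow (hdiam v) hβ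
    _ = ENNReal.ofReal ((M : ℝ) ^ d * L ^ β) := by
        rw [tsum_fintype, Finset.sum_const, Finset.card_univ, Fintype.card_fun,
          Fintype.card_fin, Fintype.card_fin, nsmul_eq_mul, ENNReal.ofReal_mul (by positivity),
          ENNReal.ofReal_rpow_of_nonneg hL₀.le hβ]
        norm_cast
    _ ≤ 2 ^ d * ENNReal.ofReal (L ^ (β - (1 / α - 1) * d)) := by
        refine (ENNReal.ofReal_le_ofReal
          (ceil_rpow_pow_mul_rpow_le hα₀ hα₁ hL₀ hL₁ β d)).trans_eq ?_
        rw [ENNReal.ofReal_mul (by positivity), ENNReal.ofReal_pow zero_le_two,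
          ENNReal.ofReal_ofNat]

end Cylinders

section Dimension

variable {d : ℕ} {α β : ℝ}

lemma exists_pCyl_seq_tsum_lt (hα₀ : 0 < α) (hα₁ : α ≤ 1) (hβ : 0 < β) {δ : ℝ}
    (hδ : 0 < δ) {η : ℝ≥0∞} (hη : η ≠ 0) :
    ∃ Q : ℕ → Set (ℝ × (Fin d → ℝ)), (∀ k, IsPCyl α (Q k)) ∧
      (∀ k, ediam (Q k) ≤ ENNReal.ofReal δ) ∧ ∑' k, ediam (Q k) ^ β < η := by
  obtain ⟨ε', hε'0, hε'⟩ := ENNReal.exists_pos_sum_of_countable hη ℕ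
  let c k := min (min δ 1) ((ε' k : ℝ) ^ β⁻¹)
  have hc k : c k ∈ Ioc 0 1 :=
    ⟨lt_min (lt_min hδ one_pos) (Real.rpow_pos_of_pos (hε'0 k) _),
      (min_le_left _ _).trans (min_le_right _ _)⟩
  have hdiam k :=
    ediam_pCyl_le hα₀ hα₁ (t := 0) (0 : Fin d → ℝ) ⟨(hc k).1.le, (hc k).2⟩
  refine ⟨fun k => pCyl α 0 0 (c k), fun k => isPCyl_pCyl _ (hc k),
    fun k => (hdiam k).trans (ENNReal.ofReal_le_ofReal ((min_le_left _ _).trans (min_le_left _ _))),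
    (ENNReal.tsum_le_tsum fun k => ?_).trans_lt hε'⟩
  rw [← ENNReal.ofReal_rpow_inv_rpow (ε' k) hβ]
  exact ENNReal.rpow_le_rpow ((hdiam k).trans (ENNReal.ofReal_le_ofReal (min_le_right _ _))) hβ.le

/-- `pHaus` only allows covers indexed by `ℕ`; a countable cover is padded with a sequence of
cylinders of arbitrarily small total cost. -/
lemma pHaus_le_of_countable_covers (hα₀ : 0 < α) (hα₁ : α ≤ 1) (hβ : 0 < β)
    {A : Set (ℝ × (Fin d → ℝ))} {K : ℝ≥0∞}
    (h : ∀ δ > 0, ∃ (ι : Type) (_ : Countable ι) (P : ι → Set (ℝ × (Fin d → ℝ))),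
      A ⊆ ⋃ i, P i ∧ (∀ i, IsPCyl α (P i)) ∧
      (∀ i, ediam (P i) ≤ ENNReal.ofReal δ) ∧ ∑' i, ediam (P i) ^ β ≤ K) :
    pHaus α β A ≤ K := by
  refine ENNReal.le_of_forall_pos_le_add fun η hη _ => iSup₂_le fun δ hδ => ?_
  obtain ⟨ι, _, P, hAP, hP, hPδ, hPK⟩ := h δ hδ
  obtain ⟨Q, hQ, hQδ, hQη⟩ :=
    exists_pCyl_seq_tsum_lt hα₀ hα₁ hβ hδ (ENNReal.coe_ne_zero.2 hη.ne')
  obtain ⟨e⟩ : Nonempty (ℕ ≃ ι ⊕ ℕ) := nonempty_equiv_of_countable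
  let R := Sum.elim P Q
  have hR : ∀ j, IsPCyl α (R j) ∧ ediam (R j) ≤ ENNReal.ofReal δ := by
    rintro (i | k)
    exacts [⟨hP i, hPδ i⟩, ⟨hQ k, hQδ k⟩]
  refine iInf₂_le_of_le (R ∘ e) ?_ (iInf₂_le_of_le (fun k => (hR (e k)).1)
    (fun k => (hR (e k)).2) ?_)
  · refine hAP.trans (iUnion_subset fun i => ?_)
    simpa [R] using subset_iUnion (R ∘ e) (e.symm (.inl i))
  · calc ∑' k, ediam ((R ∘ e) k) ^ β = ∑' j, ediam (R j) ^ β :=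
          e.tsum_eq fun j => ediam (R j) ^ β
      _ = ∑' i, ediam (P i) ^ β + ∑' k, ediam (Q k) ^ β :=
          ENNReal.summable.tsum_sum ENNReal.summable
      _ ≤ K + η := add_le_add hPK hQη.le

lemma ofReal_two_mul_rpow_le {ρ s γ : ℝ} (hρ₀ : 0 < ρ) (hρ₁ : ρ ≤ 1) (hs : 0 ≤ s)
    (hsγ : s ≤ γ) :
    ENNReal.ofReal ((2 * ρ) ^ γ) ≤ ENNReal.ofReal (2 ^ γ) * ENNReal.ofReal ρ ^ s := by
  rw [Real.mul_rpow zero_le_two hρ₀.le, ENNReal.ofReal_mul (by positivity),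
    ENNReal.ofReal_rpow_of_nonneg hρ₀.le hs]
  exact mul_le_mul_right
    (ENNReal.ofReal_le_ofReal (Real.rpow_le_rpow_of_exponent_ge hρ₀ hρ₁ hsγ)) _

lemma pHaus_le_of_cubeCoverBound (hα₀ : 0 < α) (hα₁ : α ≤ 1) (hβ : 0 < β) {γ s : ℝ}
    (hs : 0 < s) (hsγ : s ≤ γ) {C : ℝ≥0∞} (hC : CubeCoverBound α β γ C d)
    {A : Set (ℝ × (Fin d → ℝ))} (hA : μH[s] A = 0) :
    pHaus α β A ≤ C * ENNReal.ofReal (2 ^ γ) := by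
  refine pHaus_le_of_countable_covers hα₀ hα₁ hβ fun δ hδ => ?_
  set L₀ := min 1 (δ ^ α⁻¹)
  have hL₀ : 0 < L₀ := lt_min one_pos (Real.rpow_pos_of_pos hδ _)
  obtain ⟨x, ρ, hρ, hAx, hρs⟩ :=
    exists_closedBall_cover_of_hausdorffMeasure_eq_zero hs hA (half_pos hL₀) one_ne_zero
  have hρL₀ n : 2 * ρ n ≤ L₀ := by linarith [(hρ n).2]
  have hρ₁ n : 2 * ρ n ≤ 1 := (hρL₀ n).trans (min_le_left _ _)
  choose ι _ P hcube hP hPdiam hPsum using fun n =>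
    hC ((x n).1 - ρ n) (fun j => (x n).2 j - ρ n) (2 * ρ n) (by linarith [(hρ n).1]) (hρ₁ n)
  refine ⟨Σ n, ι n, inferInstance, fun p => P p.1 p.2, ?_, fun p => hP _ _, fun p => ?_, ?_⟩
  · refine hAx.trans (iUnion_subset fun n q hq => ?_)
    rw [closedBall_eq_cube _ (hρ n).1.le] at hq
    obtain ⟨i, hi⟩ := mem_iUnion.1 (hcube n hq)
    exact mem_iUnion.2 ⟨⟨n, i⟩, hi⟩
  · refine (hPdiam p.1 p.2).trans (ENNReal.ofReal_le_ofReal ?_)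
    calc (2 * ρ p.1) ^ α ≤ (δ ^ α⁻¹) ^ α :=
          Real.rpow_le_rpow (by linarith [(hρ p.1).1]) ((hρL₀ _).trans (min_le_right _ _))
            hα₀.le
      _ = δ := Real.rpow_inv_rpow hδ.le hα₀.ne'
  · have hterm n := ofReal_two_mul_rpow_le (hρ n).1 (by linarith [hρ₁ n]) hs.le hsγ
    calc ∑' p : Σ n, ι n, ediam (P p.1 p.2) ^ β = ∑' n, ∑' i, ediam (P n i) ^ β :=
          ENNReal.tsum_sigma' _
      _ ≤ ∑' n, C * ENNReal.ofReal (2 ^ γ) * ENNReal.ofReal (ρ n) ^ s :=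
          ENNReal.tsum_le_tsum fun n => (hPsum n).trans (by rw [mul_assoc]; gcongr; exact hterm n)
      _ = C * ENNReal.ofReal (2 ^ γ) * ∑' n, ENNReal.ofReal (ρ n) ^ s := ENNReal.tsum_mul_left
      _ ≤ C * ENNReal.ofReal (2 ^ γ) := mul_le_of_le_one_right' hρs.le

lemma le_dimH_of_pHaus_eq_top (hα₀ : 0 < α) (hα₁ : α ≤ 1) (hβ : 0 < β) {γ : ℝ}
    {C : ℝ≥0∞} (hC : CubeCoverBound α β γ C d) (hC_ne_top : C ≠ ⊤)
    {A : Set (ℝ × (Fin d → ℝ))} (hA : pHaus α β A = ⊤) : ENNReal.ofReal γ ≤ dimH A := by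
  by_contra! hlt
  obtain ⟨s, hAs, hsγ⟩ := ENNReal.lt_iff_exists_nnreal_btwn.1 hlt
  have hs : 0 < (s : ℝ) := NNReal.coe_pos.2 (ENNReal.coe_pos.1 (zero_le.trans_lt hAs))
  rw [← ENNReal.ofReal_coe_nnreal, ENNReal.ofReal_lt_ofReal_iff'] at hsγ
  have hle := pHaus_le_of_cubeCoverBound hα₀ hα₁ hβ hs hsγ.1.le hC
    (hausdorffMeasure_of_dimH_lt hAs)
  rw [hA, top_le_iff] at hle
  exact ENNReal.mul_ne_top hC_ne_top ENNReal.ofReal_ne_top hle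

lemma ofReal_mul_pDim_le_dimH (hα₀ : 0 < α) (hα₁ : α ≤ 1) (A : Set (ℝ × (Fin d → ℝ))) :
    ENNReal.ofReal α * pDim α A ≤ dimH A := by
  simp only [pDim, ENNReal.mul_iSup]
  refine iSup₂_le fun β hβ => ?_
  rcases eq_or_ne β 0 with rfl | hβ0
  · simp
  rw [← ENNReal.ofReal_coe_nnreal, ← ENNReal.ofReal_mul hα₀.le]
  exact le_dimH_of_pHaus_eq_top hα₀ hα₁ (NNReal.coe_pos.2 (pos_iff_ne_zero.2 hβ0))
    (cubeCoverBound_single hα₀ hα₁ β.2) ENNReal.one_ne_top hβ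

lemma pDim_le_dimH_add (hα₀ : 0 < α) (hα₁ : α ≤ 1) (A : Set (ℝ × (Fin d → ℝ))) :
    pDim α A ≤ dimH A + ENNReal.ofReal (1 / α - 1) * d := by
  refine iSup₂_le fun β hβ => ?_
  rcases eq_or_ne β 0 with rfl | hβ0
  · simp
  have hγ := le_dimH_of_pHaus_eq_top hα₀ hα₁ (NNReal.coe_pos.2 (pos_iff_ne_zero.2 hβ0))
    (cubeCoverBound_grid hα₀ hα₁ β.2) (ENNReal.pow_ne_top ENNReal.ofNat_ne_top) hβ
  calc (β : ℝ≥0∞) = ENNReal.ofReal ((β - (1 / α - 1) * d) + (1 / α - 1) * d) := by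
        rw [sub_add_cancel, ENNReal.ofReal_coe_nnreal]
    _ ≤ ENNReal.ofReal (β - (1 / α - 1) * d) + ENNReal.ofReal ((1 / α - 1) * d) :=
        ENNReal.ofReal_add_le
    _ ≤ dimH A + ENNReal.ofReal (1 / α - 1) * d := by
        rw [ENNReal.ofReal_mul (sub_nonneg.2 ((one_le_div hα₀).2 hα₁)),
          ENNReal.ofReal_natCast]
        gcongr

end Dimension

theorem graph_dim_improvement_general {d : ℕ} (T : Set ℝ) (f : ℝ → Fin d → ℝ)
    (α : ℝ) (hα1 : 0 < α) (hα2 : α ≤ 1) :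
    ENNReal.ofReal α * pDim α {p : ℝ × (Fin d → ℝ) | p.1 ∈ T ∧ p.2 = f p.1} ≤
      dimH {p : ℝ × (Fin d → ℝ) | p.1 ∈ T ∧ p.2 = f p.1} ∧
    pDim α {p : ℝ × (Fin d → ℝ) | p.1 ∈ T ∧ p.2 = f p.1} ≤
      dimH {p : ℝ × (Fin d → ℝ) | p.1 ∈ T ∧ p.2 = f p.1} +
        ENNReal.ofReal (1/α - 1) * d :=
  ⟨ofReal_mul_pDim_le_dimH hα1 hα2 _, pDim_le_dimH_add hα1 hα2 _⟩

theorem graph_dim_improvement {d : ℕ} (T : Set ℝ) (hT : MeasurableSet T)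
    (hT0 : T ⊆ Set.Ici 0) (f : ℝ → Fin d → ℝ) (hf : Measurable f)
    (α : ℝ) (hα1 : 0 < α) (hα2 : α ≤ 1) :
    ENNReal.ofReal α * pDim α {p : ℝ × (Fin d → ℝ) | p.1 ∈ T ∧ p.2 = f p.1} ≤
      dimH {p : ℝ × (Fin d → ℝ) | p.1 ∈ T ∧ p.2 = f p.1} ∧
    pDim α {p : ℝ × (Fin d → ℝ) | p.1 ∈ T ∧ p.2 = f p.1} ≤
      dimH {p : ℝ × (Fin d → ℝ) | p.1 ∈ T ∧ p.2 = f p.1} +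
        ENNReal.ofReal (1/α - 1) * d :=
  graph_dim_improvement_general T f α hα1 hα2
end
end
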